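/- arXiv:2303.12763 — 2 statements merged into one kernel-verified Lean document; each statement's English description precedes it below -/
import Mathlib

section
/- Let β > 0, κ > 0 be real and let d, g ∈ ℂ with |d| = 1. Let W₁, W₂ be i.i.d. standard real Gaussian N(0,1) random variables, set n = (1/√2)(W₁ + iW₂), and define the Rician channel h = √β·(√(κ/(κ+1))·d + √(1/(κ+1))·n). Set ξ = |√(2κ)·d + √(2(κ+1)/β)·g|², which equals 2κ + (2(κ+1)/β)|g|² + 4√(κ(κ+1)/β)·Re(conj(d)·g). Then the law of the random variable (2(κ+1)/β)·|h + g|² equals the law of (√ξ + V₁)² + V₂², where V₁, V₂ are i.i.d. standard real Gaussian N(0,1). -/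
/-!
Rescaling by `√(2(κ+1)/β)` turns `h + g` into `a + Z`, where `a = √(2κ) d + √(2(κ+1)/β) g` is
deterministic and `Z = W₁ + i W₂` has the standard Gaussian law on `ℂ ≅ ℝ²`. That law is
invariant under linear isometries, and a reflection carries `a` to the real number `‖a‖ = √ξ`,
so `‖a + Z‖²` has the same law as `‖√ξ + Z‖² = (√ξ + Re Z)² + (Im Z)²`.
-/

open MeasureTheory ProbabilityTheory Complex

theorem map_norm_add_sq_stdGaussian_of_norm_eq {E : Type*} [NormedAddCommGroup E]
    [InnerProductSpace ℝ E] [FiniteDimensional ℝ E] [MeasurableSpace E] [BorelSpace E]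
    {a b : E} (hab : ‖a‖ = ‖b‖) :
    (stdGaussian E).map (fun x => ‖a + x‖ ^ 2) = (stdGaussian E).map (fun x => ‖b + x‖ ^ 2) := by
  set R := (ℝ ∙ (b - a))ᗮ.reflection
  conv_lhs => rw [← stdGaussian_map R, Measure.map_map (by fun_prop) (by fun_prop)]
  congr 1
  ext x
  rw [Function.comp_apply, ← Submodule.reflection_sub hab.symm, ← map_add,
    LinearIsometryEquiv.norm_map]

theorem stdGaussian_complex_eq_map_prod :
    stdGaussian ℂ = ((gaussianReal 0 1).prod (gaussianReal 0 1)).map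
      (fun p : ℝ × ℝ => (p.1 : ℂ) + p.2 * I) := by
  rw [stdGaussian_eq_map_pi_orthonormalBasis Complex.orthonormalBasisOneI,
    ← (measurePreserving_finTwoArrow (gaussianReal 0 1)).map_eq,
    Measure.map_map (by fun_prop) (by fun_prop)]
  congr 1
  ext x
  simp [Fin.sum_univ_two, Complex.orthonormalBasisOneI]

theorem map_ofReal_add_mul_I_eq_stdGaussian {Ω : Type*} [MeasurableSpace Ω] {μ : Measure Ω}
    {X Y : Ω → ℝ} (hX : μ.map X = gaussianReal 0 1) (hY : μ.map Y = gaussianReal 0 1)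
    (hXY : IndepFun X Y μ) :
    μ.map (fun ω => (X ω : ℂ) + Y ω * I) = stdGaussian ℂ := by
  have hXm : AEMeasurable X μ := aemeasurable_of_map_neZero (by rw [hX]; infer_instance)
  have hYm : AEMeasurable Y μ := aemeasurable_of_map_neZero (by rw [hY]; infer_instance)
  have hpair : μ.map (fun ω => (X ω, Y ω)) = (gaussianReal 0 1).prod (gaussianReal 0 1) := by
    rw [(indepFun_iff_map_prod_eq_prod_map_map' hXm hYm (by rw [hX]; infer_instance)
      (by rw [hY]; infer_instance)).mp hXY, hX, hY]
  rw [stdGaussian_complex_eq_map_prod, ← hpair,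
    AEMeasurable.map_map_of_aemeasurable (by fun_prop) (hXm.prodMk hYm)]
  rfl

theorem map_comp_ofReal_add_mul_I_eq_map_stdGaussian {Ω E : Type*} [MeasurableSpace Ω]
    [MeasurableSpace E] {μ : Measure Ω} {X Y : Ω → ℝ} {f : ℂ → E} (hf : Measurable f)
    (hX : μ.map X = gaussianReal 0 1) (hY : μ.map Y = gaussianReal 0 1)
    (hXY : IndepFun X Y μ) :
    μ.map (fun ω => f (X ω + Y ω * I)) = (stdGaussian ℂ).map f := by
  have hZ := map_ofReal_add_mul_I_eq_stdGaussian hX hY hXY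
  rw [← hZ, AEMeasurable.map_map_of_aemeasurable hf.aemeasurable
    (aemeasurable_of_map_neZero (by rw [hZ]; infer_instance))]
  rfl

theorem norm_ofReal_mul_add_ofReal_mul_sq (r s : ℝ) (x y : ℂ) :
    ‖(r : ℂ) * x + s * y‖ ^ 2 = r ^ 2 * ‖x‖ ^ 2 + 2 * (r * s) * (starRingEnd ℂ x * y).re
      + s ^ 2 * ‖y‖ ^ 2 := by
  simp only [Complex.sq_norm, normSq_apply, add_re, add_im, mul_re, mul_im, ofReal_re,
    ofReal_im, conj_re, conj_im]
  ring

theorem norm_ofReal_add_ofReal_add_mul_I_sq (r x y : ℝ) :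
    ‖(r : ℂ) + (x + y * I)‖ ^ 2 = (r + x) ^ 2 + y ^ 2 := by
  simp only [Complex.sq_norm, normSq_apply, add_re, add_im, mul_re, mul_im, ofReal_re,
    ofReal_im, I_re, I_im]
  ring

theorem sqrt_scale_mul_rician {β κ : ℝ} (hβ : 0 < β) (hκ : 0 ≤ κ) (d z : ℂ) :
    (√(2 * (κ + 1) / β) : ℂ) *
      ((√β : ℂ) * ((√(κ / (κ + 1)) : ℂ) * d + (√(1 / (κ + 1)) : ℂ) * (1 / (√2 : ℂ) * z)))
      = √(2 * κ) * d + z := by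
  have hκ1 : 0 < κ + 1 := by linarith
  have hlos : √(2 * (κ + 1) / β) * √β * √(κ / (κ + 1)) = √(2 * κ) := by
    rw [← Real.sqrt_mul (by positivity), ← Real.sqrt_mul (by positivity)]
    congr 1
    field_simp
  have hnlos : √(2 * (κ + 1) / β) * √β * √(1 / (κ + 1)) = √2 := by
    rw [← Real.sqrt_mul (by positivity), ← Real.sqrt_mul (by positivity)]
    congr 1
    field_simp
  have hlos' := congrArg ((↑) : ℝ → ℂ) hlos
  have hnlos' := congrArg ((↑) : ℝ → ℂ) hnlos
  push_cast at hlos' hnlos'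
  field_simp
  linear_combination (√2 : ℂ) * d * hlos' + z * hnlos'

theorem sqrt_two_mul_mul_sqrt_scale {β κ : ℝ} (hκ : 0 ≤ κ) :
    √(2 * κ) * √(2 * (κ + 1) / β) = 2 * √(κ * (κ + 1) / β) := by
  rw [← Real.sqrt_mul (by positivity),
    show 2 * κ * (2 * (κ + 1) / β) = 2 ^ 2 * (κ * (κ + 1) / β) by ring,
    Real.sqrt_mul (by positivity), Real.sqrt_sq zero_le_two]

theorem stmt_2_general
    {Ω Ω' : Type*} [MeasureSpace Ω] [MeasureSpace Ω']
    (β κ : ℝ) (hβ : 0 < β) (hκ : 0 < κ) (d g : ℂ) (hd : ‖d‖ = 1)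
    (W₁ W₂ : Ω → ℝ) (V₁ V₂ : Ω' → ℝ)
    (hW₁ : Measure.map W₁ ℙ = gaussianReal 0 1)
    (hW₂ : Measure.map W₂ ℙ = gaussianReal 0 1)
    (hWindep : IndepFun W₁ W₂ ℙ)
    (hV₁ : Measure.map V₁ ℙ = gaussianReal 0 1)
    (hV₂ : Measure.map V₂ ℙ = gaussianReal 0 1)
    (hVindep : IndepFun V₁ V₂ ℙ)
    (n : Ω → ℂ) (hn : ∀ ω, n ω = (1 / (Real.sqrt 2 : ℂ)) * (W₁ ω + W₂ ω * I))
    (h : Ω → ℂ)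
    (hh : ∀ ω, h ω = (Real.sqrt β : ℂ) *
      ((Real.sqrt (κ / (κ + 1)) : ℂ) * d + (Real.sqrt (1 / (κ + 1)) : ℂ) * n ω))
    (ξ : ℝ)
    (hξ : ξ = ‖(Real.sqrt (2 * κ) : ℂ) * d
      + (Real.sqrt (2 * (κ + 1) / β) : ℂ) * g‖^2) :
    ξ = 2 * κ + (2 * (κ + 1) / β) * ‖g‖^2
        + 4 * Real.sqrt (κ * (κ + 1) / β) * (starRingEnd ℂ d * g).re ∧
    Measure.map (fun ω => (2 * (κ + 1) / β) * ‖h ω + g‖^2) ℙ =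
      Measure.map (fun ω => (Real.sqrt ξ + V₁ ω)^2 + (V₂ ω)^2) ℙ := by
  set a : ℂ := √(2 * κ) * d + √(2 * (κ + 1) / β) * g
  refine ⟨?_, ?_⟩
  · rw [hξ, norm_ofReal_mul_add_ofReal_mul_sq, sqrt_two_mul_mul_sqrt_scale hκ.le, hd,
      Real.sq_sqrt (by positivity), Real.sq_sqrt (by positivity)]
    ring
  have hscaled : ∀ ω, (2 * (κ + 1) / β) * ‖h ω + g‖ ^ 2 = ‖a + (W₁ ω + W₂ ω * I)‖ ^ 2 := by
    intro ω
    have hZ : (√(2 * (κ + 1) / β) : ℂ) * (h ω + g) = a + (W₁ ω + W₂ ω * I) := by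
      rw [hh ω, hn ω, mul_add, sqrt_scale_mul_rician hβ hκ.le]
      ring
    rw [← hZ, norm_mul, mul_pow, Complex.norm_real, Real.norm_eq_abs, sq_abs,
      Real.sq_sqrt (by positivity)]
  have hnorm : ‖a‖ = ‖((√ξ : ℝ) : ℂ)‖ := by
    rw [Complex.norm_real, Real.norm_of_nonneg (Real.sqrt_nonneg _), hξ,
      Real.sqrt_sq (norm_nonneg _)]
  calc Measure.map (fun ω => (2 * (κ + 1) / β) * ‖h ω + g‖ ^ 2) ℙ
      = Measure.map (fun ω => ‖a + (W₁ ω + W₂ ω * I)‖ ^ 2) ℙ := by simp_rw [hscaled]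
    _ = (stdGaussian ℂ).map (fun z => ‖a + z‖ ^ 2) :=
        map_comp_ofReal_add_mul_I_eq_map_stdGaussian (f := fun z => ‖a + z‖ ^ 2)
          (by fun_prop) hW₁ hW₂ hWindep
    _ = (stdGaussian ℂ).map (fun z => ‖((√ξ : ℝ) : ℂ) + z‖ ^ 2) :=
        map_norm_add_sq_stdGaussian_of_norm_eq hnorm
    _ = Measure.map (fun ω => ‖((√ξ : ℝ) : ℂ) + (V₁ ω + V₂ ω * I)‖ ^ 2) ℙ :=
        (map_comp_ofReal_add_mul_I_eq_map_stdGaussian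
          (f := fun z => ‖((√ξ : ℝ) : ℂ) + z‖ ^ 2) (by fun_prop) hV₁ hV₂ hVindep).symm
    _ = Measure.map (fun ω => (Real.sqrt ξ + V₁ ω)^2 + (V₂ ω)^2) ℙ := by
        simp_rw [norm_ofReal_add_ofReal_add_mul_I_sq]

/-- Lemma 1 of the paper: for the Rician channel
`h = √β (√(κ/(κ+1)) d + √(1/(κ+1)) n)` with `n = (W₁ + i W₂)/√2`, `W₁, W₂` i.i.d.
standard Gaussians, and a deterministic reflected channel `g`, the scaled squared
magnitude `(2(κ+1)/β) |h + g|²` is distributed as `(√ξ + V₁)² + V₂²`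
(a non-central chi-squared with 2 degrees of freedom), where
`ξ = |√(2κ) d + √(2(κ+1)/β) g|²`. -/
theorem stmt_2
    {Ω Ω' : Type*} [MeasureSpace Ω] [MeasureSpace Ω']
    [IsProbabilityMeasure (ℙ : Measure Ω)] [IsProbabilityMeasure (ℙ : Measure Ω')]
    (β κ : ℝ) (hβ : 0 < β) (hκ : 0 < κ) (d g : ℂ) (hd : ‖d‖ = 1)
    (W₁ W₂ : Ω → ℝ) (V₁ V₂ : Ω' → ℝ)
    (hW₁ : Measure.map W₁ ℙ = gaussianReal 0 1)
    (hW₂ : Measure.map W₂ ℙ = gaussianReal 0 1)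
    (hWindep : IndepFun W₁ W₂ ℙ)
    (hV₁ : Measure.map V₁ ℙ = gaussianReal 0 1)
    (hV₂ : Measure.map V₂ ℙ = gaussianReal 0 1)
    (hVindep : IndepFun V₁ V₂ ℙ)
    (n : Ω → ℂ) (hn : ∀ ω, n ω = (1 / (Real.sqrt 2 : ℂ)) * (W₁ ω + W₂ ω * I))
    (h : Ω → ℂ)
    (hh : ∀ ω, h ω = (Real.sqrt β : ℂ) *
      ((Real.sqrt (κ / (κ + 1)) : ℂ) * d + (Real.sqrt (1 / (κ + 1)) : ℂ) * n ω))
    (ξ : ℝ)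
    (hξ : ξ = ‖(Real.sqrt (2 * κ) : ℂ) * d
      + (Real.sqrt (2 * (κ + 1) / β) : ℂ) * g‖^2) :
    ξ = 2 * κ + (2 * (κ + 1) / β) * ‖g‖^2
        + 4 * Real.sqrt (κ * (κ + 1) / β) * (starRingEnd ℂ d * g).re ∧
    Measure.map (fun ω => (2 * (κ + 1) / β) * ‖h ω + g‖^2) ℙ =
      Measure.map (fun ω => (Real.sqrt ξ + V₁ ω)^2 + (V₂ ω)^2) ℙ :=
  stmt_2_general β κ hβ hκ d g hd W₁ W₂ V₁ V₂ hW₁ hW₂ hWindep hV₁ hV₂ hVindep n hn h hh ξ hξ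
end

section
/- Let B > 0 be real, let x_τ be the unique x ∈ (0, π) with sin(x)/x = √2/2, set δ = x_τ/B and C = ⌈1/δ⌉ = ⌈B/x_τ⌉. For c = 1, …, C define u(c) = 1 − (2c − 1)·δ. Then for every φ ∈ [0, π] there exists c with 1 ≤ c ≤ C such that, with ψ = B·(cos φ − u(c)), either ψ = 0 or (sin ψ / ψ)² ≥ 1/2. -/
lemma sinc_ge_half (xτ : ℝ) (hxτ : xτ ∈ Set.Ioo 0 Real.pi)
    (hv : Real.sin xτ / xτ = Real.sqrt 2 / 2) (ψ : ℝ) (hψ : |ψ| ≤ xτ)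
    (hne : ψ ≠ 0) : (Real.sin ψ / ψ)^2 ≥ 1/2 := by
  obtain ⟨hx0, hxπ⟩ := hxτ
  set s := |ψ| with hs
  have hs0 : 0 < s := abs_pos.mpr hne
  have hkey : (Real.sin ψ / ψ)^2 = (Real.sin s / s)^2 := by
    rcases abs_cases ψ with ⟨h, _⟩ | ⟨h, _⟩
    · rw [hs, h]
    · rw [hs, h, Real.sin_neg, neg_div_neg_eq]
  rw [hkey]
  -- concavity: sin s ≥ (s/xτ) * sin xτ
  have hmem0 : (0:ℝ) ∈ Set.Icc 0 Real.pi := ⟨le_refl 0, Real.pi_pos.le⟩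
  have hmemx : xτ ∈ Set.Icc 0 Real.pi := ⟨hx0.le, hxπ.le⟩
  have hanon : (0:ℝ) ≤ 1 - s/xτ := by
    have : s / xτ ≤ 1 := (div_le_one hx0).mpr hψ
    linarith
  have hconc := strictConcaveOn_sin_Icc.concaveOn.2 hmem0 hmemx hanon
    (div_nonneg hs0.le hx0.le) (by ring)
  simp only [smul_eq_mul, mul_zero, zero_add, Real.sin_zero] at hconc
  rw [div_mul_cancel₀ _ hx0.ne'] at hconc
  have h1 : Real.sin xτ / xτ ≤ Real.sin s / s := by
    rw [div_le_div_iff₀ hx0 hs0]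
    calc Real.sin xτ * s = (s / xτ * Real.sin xτ) * xτ := by
          field_simp
      _ ≤ Real.sin s * xτ := by
          apply mul_le_mul_of_nonneg_right hconc hx0.le
  have h2 : Real.sqrt 2 / 2 ≤ Real.sin s / s := hv ▸ h1
  have h3 : (0:ℝ) ≤ Real.sqrt 2 / 2 := by positivity
  have h4 : (Real.sqrt 2 / 2)^2 ≤ (Real.sin s / s)^2 :=
    pow_le_pow_left₀ h3 h2 2
  have h5 : (Real.sqrt 2 / 2)^2 = 1/2 := by
    rw [div_pow, Real.sq_sqrt (by norm_num : (2:ℝ) ≥ 0)]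
    norm_num
  linarith

/-- Correctness guarantee of the codebook design: with `B = π dx Nx f₀/ν`,
half-power argument `x_τ` (the unique `x ∈ (0, π)` with `sin x / x = √2/2`),
spacing `δ = x_τ/B`, and `C = ⌈B/x_τ⌉` configurations pointing at cosines
`u(c) = 1 − (2c−1)δ`, every direction `φ ∈ [0, π]` receives at least half-power
gain from some configuration: `ψ = B (cos φ − u(c))` satisfies `ψ = 0` or
`(sin ψ / ψ)² ≥ 1/2`. -/
theorem stmt_14 (B : ℝ) (hB : 0 < B) (xτ : ℝ)
    (hxτ : xτ ∈ Set.Ioo 0 Real.pi) (hxτval : Real.sin xτ / xτ = Real.sqrt 2 / 2)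
    (δ : ℝ) (hδ : δ = xτ / B) (C : ℕ) (hC : C = ⌈B / xτ⌉₊) :
    ∀ φ : ℝ, φ ∈ Set.Icc 0 Real.pi →
      ∃ c : ℕ, 1 ≤ c ∧ c ≤ C ∧
        (B * (Real.cos φ - (1 - (2 * (c : ℝ) - 1) * δ)) = 0 ∨
         (Real.sin (B * (Real.cos φ - (1 - (2 * (c : ℝ) - 1) * δ)))
            / (B * (Real.cos φ - (1 - (2 * (c : ℝ) - 1) * δ))))^2 ≥ 1/2) := by
  intro φ hφ
  have hx0 : 0 < xτ := hxτ.1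
  have hδ0 : 0 < δ := by rw [hδ]; positivity
  set t := Real.cos φ with ht
  have ht1 : -1 ≤ t := Real.neg_one_le_cos φ
  have ht2 : t ≤ 1 := Real.cos_le_one φ
  set a : ℝ := (1 - t) / (2 * δ) with ha
  have ha0 : 0 ≤ a := by apply div_nonneg <;> linarith
  have haC : a ≤ 1/δ := by
    rw [ha, div_le_div_iff₀ (by linarith) hδ0]
    nlinarith
  refine ⟨max 1 ⌈a⌉₊, le_max_left _ _, ?_, ?_⟩
  · rw [hC]
    have h1 : ⌈a⌉₊ ≤ ⌈B/xτ⌉₊ := by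
      apply Nat.ceil_le_ceil
      calc a ≤ 1/δ := haC
        _ = B/xτ := by rw [hδ]; field_simp
    have h2 : 1 ≤ ⌈B/xτ⌉₊ := by
      rw [Nat.one_le_ceil_iff]
      positivity
    exact max_le h2 h1
  · set c := max 1 ⌈a⌉₊ with hc
    have hca : a ≤ c := by
      rcases Nat.eq_zero_or_pos ⌈a⌉₊ with h | h
      · have : a ≤ 0 := by
          by_contra hcon
          push_neg at hcon
          have := Nat.one_le_ceil_iff.mpr hcon
          omega
        have : a = 0 := le_antisymm this ha0
        rw [this]; exact_mod_cast Nat.zero_le c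
      · have : (c:ℝ) = (⌈a⌉₊ : ℝ) := by
          rw [hc]; norm_cast; omega
        rw [this]; exact Nat.le_ceil a
    have hca2 : (c:ℝ) ≤ a + 1 := by
      have h1 : (⌈a⌉₊:ℝ) < a + 1 := Nat.ceil_lt_add_one ha0
      have h2 : (1:ℝ) ≤ a + 1 := by linarith
      rcases max_cases 1 ⌈a⌉₊ with ⟨h, _⟩ | ⟨h, _⟩ <;> rw [hc, h]
      · exact_mod_cast h2
      · linarith
    set ψ := B * (t - (1 - (2 * (c : ℝ) - 1) * δ)) with hψ
    by_cases hzero : ψ = 0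
    · left; exact hzero
    · right
      apply sinc_ge_half xτ hxτ hxτval ψ _ hzero
      have heq : t - (1 - (2 * (c : ℝ) - 1) * δ) = δ * (2*c - 1 - 2*a) := by
        rw [ha]; field_simp; ring
      have hbound : |t - (1 - (2 * (c : ℝ) - 1) * δ)| ≤ δ := by
        rw [heq, abs_mul, abs_of_pos hδ0]
        have : |2*(c:ℝ) - 1 - 2*a| ≤ 1 := by
          rw [abs_le]; constructor <;> linarith
        calc δ * |2*(c:ℝ) - 1 - 2*a| ≤ δ * 1 :=
              mul_le_mul_of_nonneg_left this hδ0.le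
          _ = δ := mul_one δ
      rw [hψ, abs_mul, abs_of_pos hB]
      calc B * |t - (1 - (2 * (c : ℝ) - 1) * δ)| ≤ B * δ :=
            mul_le_mul_of_nonneg_left hbound hB.le
        _ = xτ := by rw [hδ]; field_simp
end
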